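/- arXiv:1805.10112 — 3 statements merged into one kernel-verified Lean document; each statement's English description precedes it below -/
import Mathlib

section
/- Let G = (V,E) be a finite connected simple graph and suppose V = V₁ ∪ V₂ with V₁ ∩ V₂ = {v} a single vertex, every edge of G having both endpoints in V₁ or both in V₂, and the induced subgraphs G₁ = G[V₁] and G₂ = G[V₂] each connected with at least one edge. Then: (a) a set γ ⊆ E is a spanning tree of G if and only if γ ∩ E(G₁) is a spanning tree of G₁ and γ ∩ E(G₂) is a spanning tree of G₂; and (b) Mod₂(Γ_G)⁻¹ = Mod₂(Γ_{G₁})⁻¹ + Mod₂(Γ_{G₂})⁻¹. -/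
noncomputable section
open scoped Classical
open Finset

variable {V : Type*} [Fintype V] [DecidableEq V]

/-- A pmf on a finite family `Γ` of edge sets. -/
def IsPmf (Γ : Finset (Finset (Sym2 V))) (μ : Finset (Sym2 V) → ℝ) : Prop :=
  (∀ γ, 0 ≤ μ γ) ∧ (∀ γ, γ ∉ Γ → μ γ = 0) ∧ ∑ γ ∈ Γ, μ γ = 1

/-- Edge usage probability. -/
def eta (Γ : Finset (Finset (Sym2 V))) (μ : Finset (Sym2 V) → ℝ) (e : Sym2 V) : ℝ :=
  ∑ γ ∈ Γ.filter (fun γ => e ∈ γ), μ γ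

/-- Expected overlap. -/
def EO (Γ : Finset (Finset (Sym2 V))) (μ : Finset (Sym2 V) → ℝ) : ℝ :=
  ∑ γ ∈ Γ, ∑ γ' ∈ Γ, ((γ ∩ γ').card : ℝ) * μ γ * μ γ'

/-- Minimum expected overlap. -/
def MEO (Γ : Finset (Finset (Sym2 V))) : ℝ :=
  sInf {x : ℝ | ∃ μ, IsPmf Γ μ ∧ x = EO Γ μ}

/-- The set of spanning trees of `G`, as finsets of edges. -/
def spanningTrees (G : SimpleGraph V) : Finset (Finset (Sym2 V)) :=
  Finset.univ.filter (fun γ => ↑γ ⊆ G.edgeSet ∧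
    (SimpleGraph.fromEdgeSet (↑γ : Set (Sym2 V))).Connected ∧
    γ.card = Fintype.card V - 1)

/-- Edges of `G` with both endpoints in `W`. -/
def edgesWithin (G : SimpleGraph V) (W : Finset V) : Finset (Sym2 V) :=
  G.edgeFinset.filter (fun e => ∀ v ∈ e, v ∈ W)

/-- `γ` is a spanning tree of the subgraph of `G` induced by the vertex set `W`. -/
def IsSpanningTreeOn (G : SimpleGraph V) (W : Finset V) (γ : Finset (Sym2 V)) : Prop :=
  γ ⊆ edgesWithin G W ∧
    ((SimpleGraph.fromEdgeSet (↑γ : Set (Sym2 V))).induce (↑W : Set V)).Connected ∧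
    γ.card = W.card - 1

def spanningTreesOn (G : SimpleGraph V) (W : Finset V) : Finset (Finset (Sym2 V)) :=
  Finset.univ.filter (IsSpanningTreeOn G W)

def Adm (Γ : Finset (Finset (Sym2 V))) (ρ : Sym2 V → ℝ) : Prop :=
  (∀ e, 0 ≤ ρ e) ∧ ∀ γ ∈ Γ, 1 ≤ ∑ e ∈ γ, ρ e

def Mod2 (Eset : Finset (Sym2 V)) (Γ : Finset (Finset (Sym2 V))) : ℝ :=
  sInf {x : ℝ | ∃ ρ, Adm Γ ρ ∧ x = ∑ e ∈ Eset, (ρ e) ^ 2}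

/-- A fair spanning tree. -/
def IsFair (G : SimpleGraph V) (γ : Finset (Sym2 V)) : Prop :=
  ∃ μ, IsPmf (spanningTrees G) μ ∧ EO (spanningTrees G) μ = MEO (spanningTrees G) ∧ 0 < μ γ

def IsFeasiblePartition (G : SimpleGraph V) (P : Finset (Finset V)) : Prop :=
  2 ≤ P.card ∧ (∀ p ∈ P, p.Nonempty) ∧ (∀ v : V, ∃! p, p ∈ P ∧ v ∈ p) ∧
    ∀ p ∈ P, (G.induce (↑p : Set V)).Connected

/-- The edges of `G` joining distinct parts of the partition `P`. -/
def cutEdges (G : SimpleGraph V) (P : Finset (Finset V)) : Finset (Sym2 V) :=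
  G.edgeFinset.filter (fun e => ¬ ∃ p ∈ P, ∀ v ∈ e, v ∈ p)

/-- `G` is homogeneous. -/
def IsHomogeneous (G : SimpleGraph V) : Prop :=
  ∃ μ, IsPmf (spanningTrees G) μ ∧
    ∃ c : ℝ, ∀ e ∈ G.edgeFinset, eta (spanningTrees G) μ e = c

/-! A spanning tree of `G` is exactly a spanning tree of `G₁` together with one of `G₂`: the
two blocks share only `v`, so connectivity splits and glues at `v`, and the edge counts match
since `|V| - 1 = (|V₁| - 1) + (|V₂| - 1)`. So the spanning trees of `G` form the serial
composition of the two block families, on disjoint edge sets; let `M₁`, `M₂` be their moduli.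
If a density is admissible for the composition, every tree of the first block has length at
least some `u ∈ [0, 1]` and every tree of the second at least `1 - u`, so by rescaling its
energy is at least `u² M₁ + (1 - u)² M₂ ≥ M₁ M₂ / (M₁ + M₂)`. Conversely, near-optimal block
densities weighted by `M₂ / (M₁ + M₂)` and `M₁ / (M₁ + M₂)` are admissible with energy close
to `M₁ M₂ / (M₁ + M₂)`. -/

section Modulus

variable {α : Type*} {E E₁ E₂ : Finset (Sym2 α)} {Γ Γ₁ Γ₂ : Finset (Finset (Sym2 α))}

lemma adm_one (hΓ : ∀ γ ∈ Γ, γ.Nonempty) : Adm Γ 1 :=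
  ⟨fun _ => zero_le_one, fun γ hγ => by simpa using (hΓ γ hγ).card_pos⟩

lemma bddBelow_mod2_set :
    BddBelow {x : ℝ | ∃ ρ, Adm Γ ρ ∧ x = ∑ e ∈ E, ρ e ^ 2} :=
  ⟨0, by rintro x ⟨ρ, -, rfl⟩; positivity⟩

lemma mod2_le {ρ : Sym2 α → ℝ} (hρ : Adm Γ ρ) : Mod2 E Γ ≤ ∑ e ∈ E, ρ e ^ 2 :=
  csInf_le bddBelow_mod2_set ⟨ρ, hρ, rfl⟩

lemma mod2_set_nonempty (hΓ : ∀ γ ∈ Γ, γ.Nonempty) :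
    {x : ℝ | ∃ ρ, Adm Γ ρ ∧ x = ∑ e ∈ E, ρ e ^ 2}.Nonempty :=
  ⟨_, 1, adm_one hΓ, rfl⟩

lemma le_mod2 {c : ℝ} (hΓ : ∀ γ ∈ Γ, γ.Nonempty)
    (h : ∀ ρ, Adm Γ ρ → c ≤ ∑ e ∈ E, ρ e ^ 2) : c ≤ Mod2 E Γ :=
  le_csInf (mod2_set_nonempty hΓ) (by rintro x ⟨ρ, hρ, rfl⟩; exact h ρ hρ)

lemma exists_adm_lt_mod2_add (hΓ : ∀ γ ∈ Γ, γ.Nonempty) {ε : ℝ} (hε : 0 < ε) :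
    ∃ ρ, Adm Γ ρ ∧ ∑ e ∈ E, ρ e ^ 2 < Mod2 E Γ + ε := by
  obtain ⟨_, ⟨ρ, hρ, rfl⟩, hlt⟩ :=
    exists_lt_of_csInf_lt (mod2_set_nonempty hΓ) (lt_add_of_pos_right (Mod2 E Γ) hε)
  exact ⟨ρ, hρ, hlt⟩

lemma mod2_pos (hΓ : ∀ γ ∈ Γ, γ.Nonempty) {γ₀ : Finset (Sym2 α)} (hγ₀ : γ₀ ∈ Γ)
    (hγ₀E : γ₀ ⊆ E) : 0 < Mod2 E Γ := by
  have hn : (0 : ℝ) < #γ₀ := by exact_mod_cast (hΓ γ₀ hγ₀).card_pos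
  refine (one_div_pos.mpr hn).trans_le (le_mod2 hΓ fun ρ hρ => ?_)
  rw [div_le_iff₀ hn]
  calc 1 ≤ (∑ e ∈ γ₀, ρ e) ^ 2 := one_le_pow₀ (hρ.2 γ₀ hγ₀)
    _ ≤ #γ₀ * ∑ e ∈ γ₀, ρ e ^ 2 := sq_sum_le_card_mul_sum_sq
    _ ≤ #γ₀ * ∑ e ∈ E, ρ e ^ 2 := by gcongr
    _ = (∑ e ∈ E, ρ e ^ 2) * #γ₀ := mul_comm _ _

/-- A density whose `Γ`-lengths are all at least `s` is `s` times an admissible one. -/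
lemma sq_mul_mod2_le {ρ : Sym2 α → ℝ} {s : ℝ} (hρ : ∀ e, 0 ≤ ρ e) (hs : 0 ≤ s)
    (h : ∀ γ ∈ Γ, s ≤ ∑ e ∈ γ, ρ e) : s ^ 2 * Mod2 E Γ ≤ ∑ e ∈ E, ρ e ^ 2 := by
  rcases hs.eq_or_lt with rfl | hs
  · simpa using sum_nonneg fun e _ => sq_nonneg (ρ e)
  have hadm : Adm Γ (fun e => ρ e / s) :=
    ⟨fun e => div_nonneg (hρ e) hs.le, fun γ hγ => by
      rw [← sum_div, one_le_div hs]; exact h γ hγ⟩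
  have := mod2_le (E := E) hadm
  simp_rw [div_pow, ← sum_div] at this
  rwa [le_div_iff₀ (by positivity), mul_comm] at this

lemma harmonic_le_sq_mul_add_sq_mul {a b : ℝ} (ha : 0 < a) (hb : 0 < b) (u : ℝ) :
    a * b / (a + b) ≤ u ^ 2 * a + (1 - u) ^ 2 * b := by
  rw [div_le_iff₀ (by positivity)]
  nlinarith [sq_nonneg (u * (a + b) - b)]

end Modulus

section Serial

variable {α : Type*} [DecidableEq α] {E₁ E₂ : Finset (Sym2 α)} {Γ Γ₁ Γ₂ : Finset (Finset (Sym2 α))}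

lemma harmonic_le_mod2_of_union_mem (hE : Disjoint E₁ E₂) (hΓ₁ : ∀ γ ∈ Γ₁, γ ⊆ E₁)
    (hΓ₂ : ∀ γ ∈ Γ₂, γ ⊆ E₂) (hΓ₁ne : Γ₁.Nonempty) (hΓ : ∀ γ ∈ Γ, γ.Nonempty)
    (hM₁ : 0 < Mod2 E₁ Γ₁) (hM₂ : 0 < Mod2 E₂ Γ₂)
    (hunion : ∀ γ₁ ∈ Γ₁, ∀ γ₂ ∈ Γ₂, γ₁ ∪ γ₂ ∈ Γ) :
    Mod2 E₁ Γ₁ * Mod2 E₂ Γ₂ / (Mod2 E₁ Γ₁ + Mod2 E₂ Γ₂) ≤ Mod2 (E₁ ∪ E₂) Γ := by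
  refine le_mod2 hΓ fun ρ hρ => ?_
  obtain ⟨γm, hγm, hmin⟩ := exists_min_image Γ₁ (fun γ => ∑ e ∈ γ, ρ e) hΓ₁ne
  set u := min (∑ e ∈ γm, ρ e) 1
  have h₁ : ∀ γ ∈ Γ₁, u ≤ ∑ e ∈ γ, ρ e := fun γ hγ => (min_le_left _ _).trans (hmin γ hγ)
  have h₂ : ∀ γ ∈ Γ₂, 1 - u ≤ ∑ e ∈ γ, ρ e := fun γ hγ => by
    have hlen := hρ.2 _ (hunion γm hγm γ hγ)
    rw [sum_union (hE.mono (hΓ₁ γm hγm) (hΓ₂ γ hγ))] at hlen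
    have hnonneg : 0 ≤ ∑ e ∈ γ, ρ e := sum_nonneg fun e _ => hρ.1 e
    rcases min_cases (∑ e ∈ γm, ρ e) 1 with ⟨hu, -⟩ | ⟨hu, -⟩ <;> linarith
  have hu₀ : 0 ≤ u := le_min (sum_nonneg fun e _ => hρ.1 e) zero_le_one
  calc Mod2 E₁ Γ₁ * Mod2 E₂ Γ₂ / (Mod2 E₁ Γ₁ + Mod2 E₂ Γ₂)
      ≤ u ^ 2 * Mod2 E₁ Γ₁ + (1 - u) ^ 2 * Mod2 E₂ Γ₂ := harmonic_le_sq_mul_add_sq_mul hM₁ hM₂ u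
    _ ≤ ∑ e ∈ E₁, ρ e ^ 2 + ∑ e ∈ E₂, ρ e ^ 2 :=
      add_le_add (sq_mul_mod2_le hρ.1 hu₀ h₁)
        (sq_mul_mod2_le hρ.1 (sub_nonneg.2 (min_le_right _ _)) h₂)
    _ = ∑ e ∈ E₁ ∪ E₂, ρ e ^ 2 := (sum_union hE).symm

lemma mod2_union_le (hE : Disjoint E₁ E₂) (hsplit : ∀ γ ∈ Γ, γ ∩ E₁ ∈ Γ₁ ∧ γ ∩ E₂ ∈ Γ₂)
    {ρ₁ ρ₂ : Sym2 α → ℝ} (hρ₁ : Adm Γ₁ ρ₁) (hρ₂ : Adm Γ₂ ρ₂) {a b : ℝ} (ha : 0 ≤ a) (hb : 0 ≤ b)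
    (hab : 1 ≤ a + b) :
    Mod2 (E₁ ∪ E₂) Γ ≤ a ^ 2 * ∑ e ∈ E₁, ρ₁ e ^ 2 + b ^ 2 * ∑ e ∈ E₂, ρ₂ e ^ 2 := by
  set ρ : Sym2 α → ℝ := fun e => if e ∈ E₁ then a * ρ₁ e else b * ρ₂ e
  have hρ₁' : ∀ e ∈ E₁, ρ e = a * ρ₁ e := fun e he => if_pos he
  have hρ₂' : ∀ e ∈ E₂, ρ e = b * ρ₂ e := fun e he => if_neg (disjoint_right.mp hE he)
  have hρ0 : ∀ e, 0 ≤ ρ e := fun e => by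
    simp only [ρ]; split_ifs
    exacts [mul_nonneg ha (hρ₁.1 e), mul_nonneg hb (hρ₂.1 e)]
  have hρ : Adm Γ ρ := ⟨hρ0, fun γ hγ => calc
    (1 : ℝ) ≤ a * 1 + b * 1 := by rwa [mul_one, mul_one]
    _ ≤ a * ∑ e ∈ γ ∩ E₁, ρ₁ e + b * ∑ e ∈ γ ∩ E₂, ρ₂ e := by
      gcongr
      exacts [hρ₁.2 _ (hsplit γ hγ).1, hρ₂.2 _ (hsplit γ hγ).2]
    _ = ∑ e ∈ (γ ∩ E₁) ∪ (γ ∩ E₂), ρ e := by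
      rw [sum_union (hE.mono inter_subset_right inter_subset_right), mul_sum, mul_sum]
      congr 1 <;> refine sum_congr rfl fun e he => ?_
      exacts [(hρ₁' e (mem_inter.mp he).2).symm, (hρ₂' e (mem_inter.mp he).2).symm]
    _ ≤ ∑ e ∈ γ, ρ e :=
      sum_le_sum_of_subset_of_nonneg (union_subset inter_subset_left inter_subset_left)
        fun e _ _ => hρ0 e⟩
  calc Mod2 (E₁ ∪ E₂) Γ ≤ ∑ e ∈ E₁ ∪ E₂, ρ e ^ 2 := mod2_le hρ
    _ = a ^ 2 * ∑ e ∈ E₁, ρ₁ e ^ 2 + b ^ 2 * ∑ e ∈ E₂, ρ₂ e ^ 2 := by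
      rw [sum_union hE, mul_sum, mul_sum]
      congr 1 <;> refine sum_congr rfl fun e he => ?_
      exacts [by rw [hρ₁' e he, mul_pow], by rw [hρ₂' e he, mul_pow]]

lemma mod2_le_harmonic_of_inter_mem (hE : Disjoint E₁ E₂) (hΓ₁ : ∀ γ ∈ Γ₁, γ.Nonempty)
    (hΓ₂ : ∀ γ ∈ Γ₂, γ.Nonempty) (hM₁ : 0 < Mod2 E₁ Γ₁) (hM₂ : 0 < Mod2 E₂ Γ₂)
    (hsplit : ∀ γ ∈ Γ, γ ∩ E₁ ∈ Γ₁ ∧ γ ∩ E₂ ∈ Γ₂) :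
    Mod2 (E₁ ∪ E₂) Γ ≤ Mod2 E₁ Γ₁ * Mod2 E₂ Γ₂ / (Mod2 E₁ Γ₁ + Mod2 E₂ Γ₂) := by
  set M₁ := Mod2 E₁ Γ₁
  set M₂ := Mod2 E₂ Γ₂
  refine le_of_forall_pos_le_add fun ε hε => ?_
  obtain ⟨ρ₁, hρ₁, hlt₁⟩ := exists_adm_lt_mod2_add (E := E₁) hΓ₁ hε
  obtain ⟨ρ₂, hρ₂, hlt₂⟩ := exists_adm_lt_mod2_add (E := E₂) hΓ₂ hε
  -- the optimal series weights: `a² M₁ + b² M₂ = M₁ M₂ / (M₁ + M₂)`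
  set a := M₂ / (M₁ + M₂)
  set b := M₁ / (M₁ + M₂)
  have ha : 0 ≤ a := by positivity
  have hb : 0 ≤ b := by positivity
  have hab : a + b = 1 := by rw [← add_div, add_comm, div_self (by positivity)]
  calc Mod2 (E₁ ∪ E₂) Γ ≤ a ^ 2 * ∑ e ∈ E₁, ρ₁ e ^ 2 + b ^ 2 * ∑ e ∈ E₂, ρ₂ e ^ 2 :=
        mod2_union_le hE hsplit hρ₁ hρ₂ ha hb hab.ge
    _ ≤ a ^ 2 * (M₁ + ε) + b ^ 2 * (M₂ + ε) := by gcongr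
    _ = M₁ * M₂ / (M₁ + M₂) + (a ^ 2 + b ^ 2) * ε := by
      simp only [a, b]; field_simp; ring
    _ ≤ M₁ * M₂ / (M₁ + M₂) + ε := by
      have hsq : a ^ 2 + b ^ 2 ≤ 1 := by nlinarith [mul_nonneg ha hb]
      gcongr
      exact mul_le_of_le_one_left hε.le hsq

theorem inv_mod2_union_eq_add (hE : Disjoint E₁ E₂) (hΓ₁ : ∀ γ ∈ Γ₁, γ ⊆ E₁ ∧ γ.Nonempty)
    (hΓ₂ : ∀ γ ∈ Γ₂, γ ⊆ E₂ ∧ γ.Nonempty) (hΓ₁ne : Γ₁.Nonempty) (hΓ₂ne : Γ₂.Nonempty)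
    (hunion : ∀ γ₁ ∈ Γ₁, ∀ γ₂ ∈ Γ₂, γ₁ ∪ γ₂ ∈ Γ)
    (hsplit : ∀ γ ∈ Γ, γ ∩ E₁ ∈ Γ₁ ∧ γ ∩ E₂ ∈ Γ₂) :
    (Mod2 (E₁ ∪ E₂) Γ)⁻¹ = (Mod2 E₁ Γ₁)⁻¹ + (Mod2 E₂ Γ₂)⁻¹ := by
  obtain ⟨γ₁, h₁⟩ := hΓ₁ne
  obtain ⟨γ₂, h₂⟩ := hΓ₂ne
  have hM₁ := mod2_pos (fun γ hγ => (hΓ₁ γ hγ).2) h₁ (hΓ₁ γ₁ h₁).1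
  have hM₂ := mod2_pos (fun γ hγ => (hΓ₂ γ hγ).2) h₂ (hΓ₂ γ₂ h₂).1
  have hΓ : ∀ γ ∈ Γ, γ.Nonempty := fun γ hγ =>
    (hΓ₁ _ (hsplit γ hγ).1).2.mono inter_subset_left
  rw [le_antisymm
      (mod2_le_harmonic_of_inter_mem hE (fun γ hγ => (hΓ₁ γ hγ).2) (fun γ hγ => (hΓ₂ γ hγ).2)
        hM₁ hM₂ hsplit)
      (harmonic_le_mod2_of_union_mem hE (fun γ hγ => (hΓ₁ γ hγ).1) (fun γ hγ => (hΓ₂ γ hγ).1)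
        ⟨γ₁, h₁⟩ hΓ hM₁ hM₂ hunion),
    inv_div, inv_add_inv hM₁.ne' hM₂.ne']

end Serial

namespace SimpleGraph

theorem Reachable.map_of_adj_or_eq {α β : Type*} {G : SimpleGraph α} {H : SimpleGraph β}
    (f : α → β) (hf : ∀ ⦃a b⦄, G.Adj a b → f a = f b ∨ H.Adj (f a) (f b)) {a b : α}
    (h : G.Reachable a b) : H.Reachable (f a) (f b) := by
  rw [reachable_iff_reflTransGen] at h ⊢
  refine Relation.ReflTransGen.lift' f (fun a b hab => ?_) _ _ h
  rcases hf hab with heq | hadj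
  · exact (congrArg (Relation.ReflTransGen H.Adj (f a)) heq).mp .refl
  · exact .single hadj

theorem card_le_card_add_one_of_connected_induce {α : Type*} {s : Finset (Sym2 α)}
    {W : Finset α} (h : ((fromEdgeSet (s : Set (Sym2 α))).induce (W : Set α)).Connected) :
    #W ≤ #s + 1 := by
  have hinj : Set.InjOn (Sym2.map Subtype.val)
      ((fromEdgeSet (s : Set (Sym2 α))).induce (W : Set α)).edgeSet :=
    (Sym2.map.injective Subtype.val_injective).injOn
  have hmaps : ∀ e ∈ ((fromEdgeSet (s : Set (Sym2 α))).induce (W : Set α)).edgeSet,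
      Sym2.map Subtype.val e ∈ (s : Set (Sym2 α)) := by
    rintro ⟨p, q⟩ he
    exact ((fromEdgeSet_adj _).mp he).1
  calc #W = Nat.card (W : Set α) := ((Nat.card_coe_set_eq _).trans (Set.ncard_coe_finset W)).symm
    _ ≤ Nat.card ((fromEdgeSet (s : Set (Sym2 α))).induce (W : Set α)).edgeSet + 1 :=
      h.card_vert_le_card_edgeSet_add_one
    _ ≤ #s + 1 := by
      rw [Nat.card_coe_set_eq, ← Set.ncard_coe_finset s]
      gcongr
      exact Set.ncard_le_ncard_of_injOn _ hmaps hinj s.finite_toSet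

end SimpleGraph

open SimpleGraph

section Articulation

variable {G : SimpleGraph V} {V₁ V₂ W : Finset V} {v : V}

lemma mem_edgesWithin {e : Sym2 V} :
    e ∈ edgesWithin G W ↔ e ∈ G.edgeFinset ∧ ∀ x ∈ e, x ∈ W := mem_filter

lemma mem_spanningTreesOn {γ : Finset (Sym2 V)} :
    γ ∈ spanningTreesOn G W ↔ IsSpanningTreeOn G W γ := by
  simp [spanningTreesOn]

lemma two_le_card_of_edgesWithin_nonempty (hne : (edgesWithin G W).Nonempty) : 2 ≤ #W := by
  obtain ⟨⟨a, b⟩, he⟩ := hne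
  obtain ⟨hab, hin⟩ := mem_edgesWithin.mp he
  exact one_lt_card.mpr ⟨a, hin a (Sym2.mem_mk_left a b), b, hin b (Sym2.mem_mk_right a b),
    (mem_edgeFinset.mp hab).ne⟩

lemma subset_and_nonempty_of_mem_spanningTreesOn (hne : (edgesWithin G W).Nonempty)
    {γ : Finset (Sym2 V)} (hγ : γ ∈ spanningTreesOn G W) :
    γ ⊆ edgesWithin G W ∧ γ.Nonempty := by
  obtain ⟨hsub, -, hcard⟩ := mem_spanningTreesOn.mp hγ
  have := two_le_card_of_edgesWithin_nonempty hne
  exact ⟨hsub, card_pos.mp (by omega)⟩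

lemma spanningTrees_nonempty (hG : G.Connected) : (spanningTrees G).Nonempty := by
  obtain ⟨T, hTG, hT⟩ := hG.exists_isTree_le
  refine ⟨T.edgeFinset, mem_filter.mpr ⟨mem_univ _, ?_, ?_, ?_⟩⟩
  · rw [coe_edgeFinset]; exact edgeSet_mono hTG
  · rw [coe_edgeFinset, fromEdgeSet_edgeSet]; exact hT.connected
  · have := hT.card_edgeFinset; omega

lemma disjoint_edgesWithin (hmeet : V₁ ∩ V₂ ⊆ {v}) :
    Disjoint (edgesWithin G V₁) (edgesWithin G V₂) := by
  rw [Finset.disjoint_left]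
  rintro ⟨a, b⟩ he₁ he₂
  obtain ⟨hab, h₁⟩ := mem_edgesWithin.mp he₁
  have h₂ := (mem_edgesWithin.mp he₂).2
  have hv : ∀ x ∈ s(a, b), x = v := fun x hx =>
    mem_singleton.mp (hmeet (mem_inter.mpr ⟨h₁ x hx, h₂ x hx⟩))
  exact (mem_edgeFinset.mp hab).ne
    ((hv a (Sym2.mem_mk_left a b)).trans (hv b (Sym2.mem_mk_right a b)).symm)

lemma edgeFinset_eq_union_edgesWithin
    (hedges : ∀ e ∈ G.edgeFinset, (∀ x ∈ e, x ∈ V₁) ∨ (∀ x ∈ e, x ∈ V₂)) :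
    G.edgeFinset = edgesWithin G V₁ ∪ edgesWithin G V₂ := by
  ext e
  simp only [mem_union, mem_edgesWithin, ← and_or_left]
  exact ⟨fun he => ⟨he, hedges e he⟩, And.left⟩

/-- Collapsing `V₂` onto the articulation vertex `v` turns walks of `γ` into walks of the
`V₁`-part of `γ`. -/
lemma connected_induce_inter_edgesWithin (hmeet : V₁ ∩ V₂ = {v})
    (hedges : ∀ e ∈ G.edgeFinset, (∀ x ∈ e, x ∈ V₁) ∨ (∀ x ∈ e, x ∈ V₂))
    {γ : Finset (Sym2 V)} (hγ : ↑γ ⊆ G.edgeSet)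
    (hconn : (fromEdgeSet (γ : Set (Sym2 V))).Connected) :
    ((fromEdgeSet (↑(γ ∩ edgesWithin G V₁) : Set (Sym2 V))).induce (V₁ : Set V)).Connected := by
  have hv : v ∈ V₁ ∩ V₂ := hmeet ▸ mem_singleton_self v
  let r : V → (V₁ : Set V) := fun x => if hx : x ∈ V₁ then ⟨x, hx⟩ else ⟨v, (mem_inter.mp hv).1⟩
  have hr₁ : ∀ x (hx : x ∈ V₁), r x = ⟨x, hx⟩ := fun x hx => dif_pos hx
  have hr₂ : ∀ x ∈ V₂, r x = r v := fun x hx => by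
    by_cases hx₁ : x ∈ V₁
    · have hx' : x ∈ V₁ ∩ V₂ := mem_inter.mpr ⟨hx₁, hx⟩
      rw [hmeet, mem_singleton] at hx'
      rw [hx']
    · rw [hr₁ v (mem_inter.mp hv).1]; exact dif_neg hx₁
  have hr : ∀ ⦃a b⦄, (fromEdgeSet (γ : Set (Sym2 V))).Adj a b →
      r a = r b ∨ ((fromEdgeSet (↑(γ ∩ edgesWithin G V₁) : Set (Sym2 V))).induce
        (V₁ : Set V)).Adj (r a) (r b) := by
    intro a b hab
    rw [fromEdgeSet_adj] at hab
    have he : s(a, b) ∈ G.edgeFinset := mem_edgeFinset.mpr (hγ hab.1)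
    rcases hedges _ he with h | h
    · right
      rw [hr₁ a (h a (Sym2.mem_mk_left a b)), hr₁ b (h b (Sym2.mem_mk_right a b))]
      simp only [comap_adj, Function.Embedding.coe_subtype, fromEdgeSet_adj, coe_inter,
        Set.mem_inter_iff, mem_coe]
      exact ⟨⟨hab.1, mem_edgesWithin.mpr ⟨he, h⟩⟩, hab.2⟩
    · left
      rw [hr₂ a (h a (Sym2.mem_mk_left a b)), hr₂ b (h b (Sym2.mem_mk_right a b))]
  have : Nonempty (V₁ : Set V) := ⟨r v⟩
  refine ⟨fun x y => ?_⟩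
  simpa only [hr₁ _ x.2, hr₁ _ y.2] using (hconn.preconnected x y).map_of_adj_or_eq r hr

lemma connected_fromEdgeSet_union (hcover : V₁ ∪ V₂ = univ) (hv₁ : v ∈ V₁) (hv₂ : v ∈ V₂)
    {γ₁ γ₂ : Finset (Sym2 V)}
    (h₁ : ((fromEdgeSet (γ₁ : Set (Sym2 V))).induce (V₁ : Set V)).Connected)
    (h₂ : ((fromEdgeSet (γ₂ : Set (Sym2 V))).induce (V₂ : Set V)).Connected) :
    (fromEdgeSet (↑(γ₁ ∪ γ₂) : Set (Sym2 V))).Connected := by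
  have hreach : ∀ {γ : Finset (Sym2 V)} {W : Finset V}, γ ⊆ γ₁ ∪ γ₂ → v ∈ W →
      ((fromEdgeSet (γ : Set (Sym2 V))).induce (W : Set V)).Connected →
      ∀ x ∈ W, (fromEdgeSet (↑(γ₁ ∪ γ₂) : Set (Sym2 V))).Reachable x v :=
    fun hsub hv h x hx => ((h.preconnected ⟨x, hx⟩ ⟨v, hv⟩).map
      (Embedding.induce _).toHom).mono (fromEdgeSet_mono (coe_subset.mpr hsub))
  have hv : ∀ x, (fromEdgeSet (↑(γ₁ ∪ γ₂) : Set (Sym2 V))).Reachable x v := fun x =>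
    (mem_union.mp (hcover ▸ mem_univ x)).elim (hreach subset_union_left hv₁ h₁ x)
      (hreach subset_union_right hv₂ h₂ x)
  have : Nonempty V := ⟨v⟩
  exact ⟨fun x y => (hv x).trans (hv y).symm⟩

theorem mem_spanningTrees_iff_of_articulation (hcover : V₁ ∪ V₂ = univ)
    (hmeet : V₁ ∩ V₂ = {v})
    (hedges : ∀ e ∈ G.edgeFinset, (∀ x ∈ e, x ∈ V₁) ∨ (∀ x ∈ e, x ∈ V₂))
    {γ : Finset (Sym2 V)} (hγ : ↑γ ⊆ G.edgeSet) :
    γ ∈ spanningTrees G ↔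
      IsSpanningTreeOn G V₁ (γ ∩ edgesWithin G V₁) ∧
      IsSpanningTreeOn G V₂ (γ ∩ edgesWithin G V₂) := by
  have hv : v ∈ V₁ ∩ V₂ := hmeet ▸ mem_singleton_self v
  have hsplit : γ = γ ∩ edgesWithin G V₁ ∪ γ ∩ edgesWithin G V₂ := by
    rw [← inter_union_distrib_left, ← edgeFinset_eq_union_edgesWithin hedges,
      inter_eq_left.mpr (coe_subset.mp (by rwa [coe_edgeFinset]))]
  have hcard : #γ = #(γ ∩ edgesWithin G V₁) + #(γ ∩ edgesWithin G V₂) := by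
    conv_lhs => rw [hsplit]
    exact card_union_of_disjoint
      ((disjoint_edgesWithin hmeet.subset).mono inter_subset_right inter_subset_right)
  have hV : #V₁ + #V₂ = Fintype.card V + 1 := by
    rw [← card_union_add_card_inter, hcover, hmeet, card_univ, card_singleton]
  have hV₁ : 0 < #V₁ := card_pos.mpr ⟨v, (mem_inter.mp hv).1⟩
  have hV₂ : 0 < #V₂ := card_pos.mpr ⟨v, (mem_inter.mp hv).2⟩
  simp only [spanningTrees, mem_filter, mem_univ, true_and, IsSpanningTreeOn, inter_subset_right,
    hγ]
  constructor
  · rintro ⟨hconn, hcardγ⟩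
    have h₁ := connected_induce_inter_edgesWithin hmeet hedges hγ hconn
    have h₂ := connected_induce_inter_edgesWithin ((inter_comm V₂ V₁).trans hmeet)
      (fun e he => (hedges e he).symm) hγ hconn
    have := card_le_card_add_one_of_connected_induce h₁
    have := card_le_card_add_one_of_connected_induce h₂
    exact ⟨⟨h₁, by omega⟩, ⟨h₂, by omega⟩⟩
  · rintro ⟨⟨h₁, hcard₁⟩, ⟨h₂, hcard₂⟩⟩
    refine ⟨?_, by omega⟩
    rw [hsplit]
    exact connected_fromEdgeSet_union hcover (mem_inter.mp hv).1 (mem_inter.mp hv).2 h₁ h₂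

lemma union_mem_spanningTrees (hcover : V₁ ∪ V₂ = univ) (hmeet : V₁ ∩ V₂ = {v})
    (hedges : ∀ e ∈ G.edgeFinset, (∀ x ∈ e, x ∈ V₁) ∨ (∀ x ∈ e, x ∈ V₂))
    {γ₁ γ₂ : Finset (Sym2 V)} (h₁ : γ₁ ∈ spanningTreesOn G V₁) (h₂ : γ₂ ∈ spanningTreesOn G V₂) :
    γ₁ ∪ γ₂ ∈ spanningTrees G := by
  have hsub₁ := (mem_spanningTreesOn.mp h₁).1
  have hsub₂ := (mem_spanningTreesOn.mp h₂).1
  have hdisj := disjoint_edgesWithin (G := G) hmeet.subset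
  have hγ : ↑(γ₁ ∪ γ₂) ⊆ G.edgeSet := by
    rw [← coe_edgeFinset, coe_subset, edgeFinset_eq_union_edgesWithin hedges]
    exact union_subset_union hsub₁ hsub₂
  rw [mem_spanningTrees_iff_of_articulation hcover hmeet hedges hγ, union_inter_distrib_right,
    union_inter_distrib_right, inter_eq_left.mpr hsub₁, inter_eq_left.mpr hsub₂,
    disjoint_iff_inter_eq_empty.mp (hdisj.mono_left hsub₁),
    disjoint_iff_inter_eq_empty.mp (hdisj.symm.mono_left hsub₂), union_empty, empty_union,
    ← mem_spanningTreesOn, ← mem_spanningTreesOn]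
  exact ⟨h₁, h₂⟩

lemma inter_edgesWithin_mem_spanningTreesOn (hcover : V₁ ∪ V₂ = univ) (hmeet : V₁ ∩ V₂ = {v})
    (hedges : ∀ e ∈ G.edgeFinset, (∀ x ∈ e, x ∈ V₁) ∨ (∀ x ∈ e, x ∈ V₂))
    {γ : Finset (Sym2 V)} (hγ : γ ∈ spanningTrees G) :
    γ ∩ edgesWithin G V₁ ∈ spanningTreesOn G V₁ ∧ γ ∩ edgesWithin G V₂ ∈ spanningTreesOn G V₂ := by
  simp only [mem_spanningTreesOn]
  exact (mem_spanningTrees_iff_of_articulation hcover hmeet hedges (mem_filter.mp hγ).2.1).mp hγ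

end Articulation

theorem spanning_tree_serial_rule_articulation_general
    {V : Type*} [Fintype V] [DecidableEq V]
    (G : SimpleGraph V) (hG : G.Connected)
    (V₁ V₂ : Finset V) (v : V)
    (hcover : V₁ ∪ V₂ = Finset.univ) (hmeet : V₁ ∩ V₂ = {v})
    (hedges : ∀ e ∈ G.edgeFinset, (∀ x ∈ e, x ∈ V₁) ∨ (∀ x ∈ e, x ∈ V₂))
    (hne₁ : (edgesWithin G V₁).Nonempty) (hne₂ : (edgesWithin G V₂).Nonempty) :
    (∀ γ : Finset (Sym2 V), ↑γ ⊆ G.edgeSet →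
      (γ ∈ spanningTrees G ↔
        IsSpanningTreeOn G V₁ (γ ∩ edgesWithin G V₁) ∧
        IsSpanningTreeOn G V₂ (γ ∩ edgesWithin G V₂))) ∧
    (Mod2 G.edgeFinset (spanningTrees G))⁻¹ =
      (Mod2 (edgesWithin G V₁) (spanningTreesOn G V₁))⁻¹ +
      (Mod2 (edgesWithin G V₂) (spanningTreesOn G V₂))⁻¹ := by
  refine ⟨fun γ hγ => mem_spanningTrees_iff_of_articulation hcover hmeet hedges hγ, ?_⟩
  have hsplit := fun γ (hγ : γ ∈ spanningTrees G) =>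
    inter_edgesWithin_mem_spanningTreesOn hcover hmeet hedges hγ
  obtain ⟨γ, hγ⟩ := spanningTrees_nonempty hG
  rw [edgeFinset_eq_union_edgesWithin hedges]
  exact inv_mod2_union_eq_add (disjoint_edgesWithin hmeet.subset)
    (fun _ => subset_and_nonempty_of_mem_spanningTreesOn hne₁)
    (fun _ => subset_and_nonempty_of_mem_spanningTreesOn hne₂)
    ⟨_, (hsplit γ hγ).1⟩ ⟨_, (hsplit γ hγ).2⟩
    (fun _ h₁ _ h₂ => union_mem_spanningTrees hcover hmeet hedges h₁ h₂) hsplit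

/-- serial rule at an articulation vertex. -/
theorem spanning_tree_serial_rule_articulation
    {V : Type*} [Fintype V] [DecidableEq V]
    (G : SimpleGraph V) (hG : G.Connected)
    (V₁ V₂ : Finset V) (v : V)
    (hcover : V₁ ∪ V₂ = Finset.univ) (hmeet : V₁ ∩ V₂ = {v})
    (hedges : ∀ e ∈ G.edgeFinset, (∀ x ∈ e, x ∈ V₁) ∨ (∀ x ∈ e, x ∈ V₂))
    (hconn₁ : (G.induce (↑V₁ : Set V)).Connected)
    (hconn₂ : (G.induce (↑V₂ : Set V)).Connected)
    (hne₁ : (edgesWithin G V₁).Nonempty) (hne₂ : (edgesWithin G V₂).Nonempty) :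
    (∀ γ : Finset (Sym2 V), ↑γ ⊆ G.edgeSet →
      (γ ∈ spanningTrees G ↔
        IsSpanningTreeOn G V₁ (γ ∩ edgesWithin G V₁) ∧
        IsSpanningTreeOn G V₂ (γ ∩ edgesWithin G V₂))) ∧
    (Mod2 G.edgeFinset (spanningTrees G))⁻¹ =
      (Mod2 (edgesWithin G V₁) (spanningTreesOn G V₁))⁻¹ +
      (Mod2 (edgesWithin G V₂) (spanningTreesOn G V₂))⁻¹ :=
  spanning_tree_serial_rule_articulation_general G hG V₁ V₂ v hcover hmeet hedges hne₁ hne₂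
end
end

section
/- Let G = (V,E) be a finite connected simple graph with at least one edge. For every pmf μ on Γ_G, the expected overlap satisfies 𝔼_μ = |E| · Var(η_μ) + (|V| − 1)²/|E|, where Var(η) = (1/|E|)∑_{e∈E} η(e)² − ((1/|E|)∑_{e∈E} η(e))². Consequently, a pmf μ is MEO-optimal if and only if Var(η_μ) ≤ Var(η_ν) for every pmf ν on Γ_G; moreover, any two MEO-optimal pmfs μ*, ν* have the same edge usage function: η_{μ*} = η_{ν*}. -/
/-!
Every spanning tree has `|V| - 1` edges, so `∑ₑ η_μ(e) = |V| - 1` for every pmf `μ`, while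
`𝔼_μ = ∑ₑ η_μ(e)²`. The decomposition is then `∑ x² = n · Var x + (∑ x)² / n`, so minimizing
`𝔼_μ` is minimizing the variance, and the strict convexity of `η ↦ ∑ₑ η(e)²` makes the optimal
edge usage unique.
-/

noncomputable section
open scoped Classical
open Finset

variable {V : Type*} [Fintype V] [DecidableEq V]

/-- The variance of edge usage probabilities over the edges of `G`. -/
def Var {V : Type*} [Fintype V] [DecidableEq V] (G : SimpleGraph V) (η : Sym2 V → ℝ) : ℝ :=
  (∑ e ∈ G.edgeFinset, (η e) ^ 2) / (G.edgeFinset.card : ℝ) -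
    ((∑ e ∈ G.edgeFinset, η e) / (G.edgeFinset.card : ℝ)) ^ 2

section

omit [Fintype V]

lemma card_inter_eq_sum_ite {E γ : Finset (Sym2 V)} (γ' : Finset (Sym2 V)) (hγ : γ ⊆ E) :
    ((γ ∩ γ').card : ℝ) = ∑ e ∈ E, (if e ∈ γ then 1 else 0) * (if e ∈ γ' then 1 else 0) := by
  simp only [ite_zero_mul_ite_zero, one_mul, sum_boole]
  rw [filter_and, filter_mem_eq_inter, filter_mem_eq_inter,
    inter_eq_right.mpr hγ, ← inter_assoc, inter_eq_left.mpr hγ]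

lemma eta_eq_sum_ite (Γ : Finset (Finset (Sym2 V))) (μ : Finset (Sym2 V) → ℝ) (e : Sym2 V) :
    eta Γ μ e = ∑ γ ∈ Γ, if e ∈ γ then μ γ else 0 :=
  sum_filter _ _

/-- Expanding the square of `η_μ(e) = ∑_γ [e ∈ γ] μ γ` and summing over `e` counts each
common edge of `γ` and `γ'` once. -/
lemma EO_eq_sum_eta_sq {Γ : Finset (Finset (Sym2 V))} {E : Finset (Sym2 V)}
    (hΓ : ∀ γ ∈ Γ, γ ⊆ E) (μ : Finset (Sym2 V) → ℝ) :
    EO Γ μ = ∑ e ∈ E, eta Γ μ e ^ 2 := by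
  simp only [EO, eta_eq_sum_ite, sq, sum_mul_sum]
  symm
  rw [sum_comm]
  refine sum_congr rfl fun γ hγ => ?_
  rw [sum_comm]
  refine sum_congr rfl fun γ' _ => ?_
  rw [card_inter_eq_sum_ite γ' (hΓ γ hγ), sum_mul, sum_mul]
  refine sum_congr rfl fun e _ => ?_
  split_ifs <;> ring

lemma sum_eta_eq_sum_card_mul {Γ : Finset (Finset (Sym2 V))} {E : Finset (Sym2 V)}
    (hΓ : ∀ γ ∈ Γ, γ ⊆ E) (μ : Finset (Sym2 V) → ℝ) :
    ∑ e ∈ E, eta Γ μ e = ∑ γ ∈ Γ, (γ.card : ℝ) * μ γ := by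
  simp only [eta_eq_sum_ite]
  rw [sum_comm]
  refine sum_congr rfl fun γ hγ => ?_
  rw [← sum_filter, filter_mem_eq_inter, inter_eq_right.mpr (hΓ γ hγ),
    sum_const, nsmul_eq_mul]

lemma EO_nonneg {Γ : Finset (Finset (Sym2 V))} {μ : Finset (Sym2 V) → ℝ} (hμ : ∀ γ, 0 ≤ μ γ) :
    0 ≤ EO Γ μ :=
  sum_nonneg fun γ _ => sum_nonneg fun γ' _ =>
    mul_nonneg (mul_nonneg (Nat.cast_nonneg _) (hμ γ)) (hμ γ')

lemma MEO_le_EO {Γ : Finset (Finset (Sym2 V))} {μ : Finset (Sym2 V) → ℝ} (hμ : IsPmf Γ μ) :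
    MEO Γ ≤ EO Γ μ :=
  csInf_le ⟨0, by rintro x ⟨ν, hν, rfl⟩; exact EO_nonneg hν.1⟩ ⟨μ, hμ, rfl⟩

lemma EO_eq_MEO_iff {Γ : Finset (Finset (Sym2 V))} {μ : Finset (Sym2 V) → ℝ} (hμ : IsPmf Γ μ) :
    EO Γ μ = MEO Γ ↔ ∀ ν, IsPmf Γ ν → EO Γ μ ≤ EO Γ ν := by
  refine ⟨fun hopt ν hν => hopt ▸ MEO_le_EO hν, fun hmin => ?_⟩
  refine le_antisymm (le_csInf ⟨_, μ, hμ, rfl⟩ ?_) (MEO_le_EO hμ)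
  rintro x ⟨ν, hν, rfl⟩
  exact hmin ν hν

omit [DecidableEq V] in
lemma IsPmf.midpoint {Γ : Finset (Finset (Sym2 V))} {μ ν : Finset (Sym2 V) → ℝ}
    (hμ : IsPmf Γ μ) (hν : IsPmf Γ ν) : IsPmf Γ (fun γ => (μ γ + ν γ) / 2) := by
  refine ⟨fun γ => by linarith [hμ.1 γ, hν.1 γ], fun γ hγ => by simp [hμ.2.1 γ hγ, hν.2.1 γ hγ],
    ?_⟩
  rw [← sum_div, sum_add_distrib, hμ.2.2, hν.2.2]
  norm_num

lemma eta_midpoint (Γ : Finset (Finset (Sym2 V))) (μ ν : Finset (Sym2 V) → ℝ) (e : Sym2 V) :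
    eta Γ (fun γ => (μ γ + ν γ) / 2) e = (eta Γ μ e + eta Γ ν e) / 2 := by
  simp only [eta, ← sum_div, sum_add_distrib]

end

/-- Parallelogram law for the quadratic form `μ ↦ ∑ₑ η_μ(e)²`. -/
lemma EO_midpoint (Γ : Finset (Finset (Sym2 V))) (μ ν : Finset (Sym2 V) → ℝ) :
    EO Γ (fun γ => (μ γ + ν γ) / 2) =
      (EO Γ μ + EO Γ ν) / 2 - (∑ e, (eta Γ μ e - eta Γ ν e) ^ 2) / 4 := by
  have hΓ : ∀ γ ∈ Γ, γ ⊆ univ := fun γ _ => subset_univ γ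
  simp only [EO_eq_sum_eta_sq hΓ, eta_midpoint, ← sum_add_distrib, sum_div,
    ← sum_sub_distrib]
  exact sum_congr rfl fun e _ => by ring

/-- The midpoint of two minimizers is admissible, so by `EO_midpoint` the squared distance
between their edge usages is `≤ 0`. -/
lemma eta_eq_of_EO_eq_MEO {Γ : Finset (Finset (Sym2 V))} {μ ν : Finset (Sym2 V) → ℝ}
    (hμ : IsPmf Γ μ) (hν : IsPmf Γ ν) (hμo : EO Γ μ = MEO Γ) (hνo : EO Γ ν = MEO Γ) :
    eta Γ μ = eta Γ ν := by
  have hmid := MEO_le_EO (hμ.midpoint hν)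
  rw [EO_midpoint, hμo, hνo] at hmid
  have hsq : ∑ e, (eta Γ μ e - eta Γ ν e) ^ 2 = 0 :=
    le_antisymm (by linarith) (sum_nonneg fun e _ => sq_nonneg _)
  funext e
  have he := (sum_eq_zero_iff_of_nonneg fun e _ => sq_nonneg _).mp hsq e
    (mem_univ e)
  exact sub_eq_zero.mp (pow_eq_zero_iff two_ne_zero |>.mp he)

lemma subset_edgeFinset_of_mem_spanningTrees {G : SimpleGraph V} {γ : Finset (Sym2 V)}
    (h : γ ∈ spanningTrees G) : γ ⊆ G.edgeFinset := fun _ he =>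
  SimpleGraph.mem_edgeFinset.mpr ((mem_filter.mp h).2.1 he)

lemma card_of_mem_spanningTrees {G : SimpleGraph V} {γ : Finset (Sym2 V)}
    (h : γ ∈ spanningTrees G) : γ.card = Fintype.card V - 1 :=
  (mem_filter.mp h).2.2.2

lemma card_mul_Var {G : SimpleGraph V} (hE : G.edgeFinset.Nonempty) (η : Sym2 V → ℝ) :
    (G.edgeFinset.card : ℝ) * Var G η =
      ∑ e ∈ G.edgeFinset, η e ^ 2 - (∑ e ∈ G.edgeFinset, η e) ^ 2 / G.edgeFinset.card := by
  have hm : (G.edgeFinset.card : ℝ) ≠ 0 := by exact_mod_cast hE.card_pos.ne'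
  rw [Var]
  field_simp

lemma sum_eta_spanningTrees {G : SimpleGraph V} (hE : G.edgeFinset.Nonempty)
    {μ : Finset (Sym2 V) → ℝ} (hμ : IsPmf (spanningTrees G) μ) :
    ∑ e ∈ G.edgeFinset, eta (spanningTrees G) μ e = (Fintype.card V : ℝ) - 1 := by
  obtain ⟨e, -⟩ := hE
  have hV : 1 ≤ Fintype.card V := Fintype.card_pos_iff.mpr ⟨(Quot.out e).1⟩
  rw [sum_eta_eq_sum_card_mul fun γ => subset_edgeFinset_of_mem_spanningTrees,
    sum_congr rfl fun γ hγ => by rw [card_of_mem_spanningTrees hγ], ← mul_sum,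
    hμ.2.2, mul_one, Nat.cast_sub hV, Nat.cast_one]

lemma EO_spanningTrees_eq {G : SimpleGraph V} (hE : G.edgeFinset.Nonempty)
    {μ : Finset (Sym2 V) → ℝ} (hμ : IsPmf (spanningTrees G) μ) :
    EO (spanningTrees G) μ =
      (G.edgeFinset.card : ℝ) * Var G (eta (spanningTrees G) μ) +
        ((Fintype.card V : ℝ) - 1) ^ 2 / (G.edgeFinset.card : ℝ) := by
  rw [card_mul_Var hE, sum_eta_spanningTrees hE hμ,
    EO_eq_sum_eta_sq fun γ => subset_edgeFinset_of_mem_spanningTrees]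
  ring

theorem expected_overlap_variance_decomposition_general
    {V : Type*} [Fintype V] [DecidableEq V]
    (G : SimpleGraph V) (hE : G.edgeFinset.Nonempty) :
    (∀ μ, IsPmf (spanningTrees G) μ →
      EO (spanningTrees G) μ =
        (G.edgeFinset.card : ℝ) * Var G (eta (spanningTrees G) μ) +
          ((Fintype.card V : ℝ) - 1) ^ 2 / (G.edgeFinset.card : ℝ)) ∧
    (∀ μ, IsPmf (spanningTrees G) μ →
      (EO (spanningTrees G) μ = MEO (spanningTrees G) ↔
        ∀ ν, IsPmf (spanningTrees G) ν →
          Var G (eta (spanningTrees G) μ) ≤ Var G (eta (spanningTrees G) ν))) ∧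
    (∀ μ ν, IsPmf (spanningTrees G) μ → IsPmf (spanningTrees G) ν →
      EO (spanningTrees G) μ = MEO (spanningTrees G) →
      EO (spanningTrees G) ν = MEO (spanningTrees G) →
      eta (spanningTrees G) μ = eta (spanningTrees G) ν) := by
  have hm : (0 : ℝ) < G.edgeFinset.card := by exact_mod_cast hE.card_pos
  refine ⟨fun μ hμ => EO_spanningTrees_eq hE hμ, fun μ hμ => ?_,
    fun μ ν hμ hν => eta_eq_of_EO_eq_MEO hμ hν⟩
  rw [EO_eq_MEO_iff hμ]
  refine forall₂_congr fun ν hν => ?_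
  rw [EO_spanningTrees_eq hE hμ, EO_spanningTrees_eq hE hν, add_le_add_iff_right,
    mul_le_mul_iff_right₀ hm]

/-- `𝔼_μ = |E|·Var(η_μ) + (|V|-1)²/|E|`; a pmf is MEO-optimal iff
its edge usage variance is minimal; and all MEO-optimal pmfs share the same
edge usage function. -/
theorem expected_overlap_variance_decomposition
    {V : Type*} [Fintype V] [DecidableEq V]
    (G : SimpleGraph V) (hG : G.Connected) (hE : G.edgeFinset.Nonempty) :
    (∀ μ, IsPmf (spanningTrees G) μ →
      EO (spanningTrees G) μ =
        (G.edgeFinset.card : ℝ) * Var G (eta (spanningTrees G) μ) +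
          ((Fintype.card V : ℝ) - 1) ^ 2 / (G.edgeFinset.card : ℝ)) ∧
    (∀ μ, IsPmf (spanningTrees G) μ →
      (EO (spanningTrees G) μ = MEO (spanningTrees G) ↔
        ∀ ν, IsPmf (spanningTrees G) ν →
          Var G (eta (spanningTrees G) μ) ≤ Var G (eta (spanningTrees G) ν))) ∧
    (∀ μ ν, IsPmf (spanningTrees G) μ → IsPmf (spanningTrees G) ν →
      EO (spanningTrees G) μ = MEO (spanningTrees G) →
      EO (spanningTrees G) ν = MEO (spanningTrees G) →
      eta (spanningTrees G) μ = eta (spanningTrees G) ν) :=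
  expected_overlap_variance_decomposition_general G hE
end
end

section
/- Let G = (V,E) be a finite connected simple graph with at least one edge, let μ* be an MEO-optimal pmf on Γ_G, and let η* = η_{μ*}. Then for every feasible partition P of G one has ∑_{e∈E_P} η*(e) ≥ k_P − 1; moreover, if every fair spanning tree γ of G satisfies |γ ∩ E_P| = k_P − 1, then ∑_{e∈E_P} η*(e) = k_P − 1. In particular, there exists an edge e ∈ E_P with η*(e) ≥ (k_P − 1)/|E_P|. -/
noncomputable section
open scoped Classical
open Finset

variable {V : Type*} [Fintype V] [DecidableEq V]

/-!
Contracting every part of a feasible partition `P` maps a spanning tree onto a connected graph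
on the `k_P` parts, whose edges are images of cut edges of the tree; so every spanning tree has
at least `k_P - 1` cut edges. Since `∑_{e ∈ E_P} η_μ(e)` is the `μ`-average of `|γ ∩ E_P|`, the
bound follows, with equality when every tree charged by `μ` has exactly `k_P - 1` cut edges, and
the pigeonhole principle gives the last claim.
-/

open SimpleGraph Function

section Contraction

variable {α β : Type*}

theorem SimpleGraph.Reachable.fromEdgeSet_image_map {s : Set (Sym2 α)} (f : α → β) {u v : α}
    (h : (fromEdgeSet s).Reachable u v) :
    (fromEdgeSet (Sym2.map f '' s)).Reachable (f u) (f v) := by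
  rw [reachable_iff_reflTransGen] at h ⊢
  refine Relation.ReflTransGen.lift' f (fun x y hxy => ?_) u v h
  by_cases hfxy : f x = f y
  · show Relation.ReflTransGen _ (f x) (f y)
    rw [hfxy]
  · exact .single ⟨⟨s(x, y), (fromEdgeSet_adj s).1 hxy |>.1, rfl⟩, hfxy⟩

theorem SimpleGraph.Connected.fromEdgeSet_image_map {s : Set (Sym2 α)} {f : α → β}
    (hs : (fromEdgeSet s).Connected) (hf : Surjective f) :
    (fromEdgeSet (Sym2.map f '' s)).Connected := by
  have : Nonempty β := hs.nonempty.map f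
  refine .mk fun p q => ?_
  obtain ⟨u, rfl⟩ := hf p
  obtain ⟨v, rfl⟩ := hf q
  exact (hs.preconnected u v).fromEdgeSet_image_map f

theorem SimpleGraph.Connected.card_le_card_filter_not_isDiag_map_add_one
    [Finite β] [DecidableEq β] {s : Finset (Sym2 α)} {f : α → β}
    (hs : (fromEdgeSet (s : Set (Sym2 α))).Connected) (hf : Surjective f) :
    Nat.card β ≤ #{e ∈ s | ¬ (e.map f).IsDiag} + 1 := by
  have hsub : (fromEdgeSet (Sym2.map f '' s)).edgeSet ⊆
      ↑({e ∈ s | ¬ (e.map f).IsDiag}.image (Sym2.map f)) := by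
    intro _ h
    rw [edgeSet_fromEdgeSet] at h
    obtain ⟨⟨e, he, rfl⟩, hdiag⟩ := h
    exact mem_image_of_mem _ (mem_filter.2 ⟨he, hdiag⟩)
  calc Nat.card β ≤ Nat.card (fromEdgeSet (Sym2.map f '' s)).edgeSet + 1 :=
        (hs.fromEdgeSet_image_map hf).card_vert_le_card_edgeSet_add_one
    _ ≤ #({e ∈ s | ¬ (e.map f).IsDiag}.image (Sym2.map f)) + 1 := by
        rw [Nat.card_coe_set_eq, ← Set.ncard_coe_finset]
        exact Nat.add_le_add_right (Set.ncard_le_ncard hsub) 1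
    _ ≤ #{e ∈ s | ¬ (e.map f).IsDiag} + 1 := by gcongr; exact card_image_le

end Contraction

section Blocks

variable {α : Type*} {P : Finset (Finset α)}

def blockOf (hP : ∀ v, ∃! p, p ∈ P ∧ v ∈ p) (v : α) : P :=
  ⟨(hP v).choose, (hP v).choose_spec.1.1⟩

variable (hP : ∀ v, ∃! p, p ∈ P ∧ v ∈ p)

theorem blockOf_eq_iff {v : α} {p : P} : blockOf hP v = p ↔ v ∈ (p : Finset α) :=
  ⟨fun h => h ▸ (hP v).choose_spec.1.2,
    fun h => Subtype.ext ((hP v).unique (hP v).choose_spec.1 ⟨p.2, h⟩)⟩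

theorem blockOf_eq_blockOf_iff {x y : α} :
    blockOf hP x = blockOf hP y ↔ ∃ p ∈ P, x ∈ p ∧ y ∈ p := by
  refine ⟨fun h => ⟨_, (blockOf hP y).2, h ▸ (blockOf_eq_iff hP).1 rfl,
    (blockOf_eq_iff hP).1 rfl⟩, fun ⟨p, hp, hx, hy⟩ => ?_⟩
  rw [(blockOf_eq_iff hP (p := ⟨p, hp⟩)).2 hx, (blockOf_eq_iff hP (p := ⟨p, hp⟩)).2 hy]

theorem blockOf_surjective (hne : ∀ p ∈ P, p.Nonempty) : Surjective (blockOf hP) := fun p =>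
  let ⟨v, hv⟩ := hne p p.2
  ⟨v, (blockOf_eq_iff hP).2 hv⟩

end Blocks

section CutEdges

variable {G : SimpleGraph V} {P : Finset (Finset V)}

theorem mem_cutEdges_iff_not_isDiag_map (hP : ∀ v, ∃! p, p ∈ P ∧ v ∈ p) {e : Sym2 V}
    (he : e ∈ G.edgeSet) : e ∈ cutEdges G P ↔ ¬ (e.map (blockOf hP)).IsDiag := by
  induction e using Sym2.ind with
  | _ x y =>
    simp only [cutEdges, mem_filter, mem_edgeFinset, he, true_and, Sym2.mem_iff,
      forall_eq_or_imp, forall_eq, Sym2.map_mk, Sym2.mk_isDiag_iff, blockOf_eq_blockOf_iff]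

theorem IsFeasiblePartition.card_sub_one_le_card_inter_cutEdges (hP : IsFeasiblePartition G P)
    {γ : Finset (Sym2 V)} (hγ : γ ∈ spanningTrees G) :
    P.card - 1 ≤ #(γ ∩ cutEdges G P) := by
  obtain ⟨-, hne, hblocks, -⟩ := hP
  obtain ⟨hγG, hγconn, -⟩ := (mem_filter.1 hγ).2
  have hbound := hγconn.card_le_card_filter_not_isDiag_map_add_one
    (blockOf_surjective hblocks hne)
  have hcut : {e ∈ γ | ¬ (e.map (blockOf hblocks)).IsDiag} = γ ∩ cutEdges G P := by
    ext e
    rw [mem_filter, mem_inter, and_congr_right_iff]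
    exact fun he => (mem_cutEdges_iff_not_isDiag_map hblocks (hγG he)).symm
  rw [Nat.card_eq_fintype_card, Fintype.card_coe, hcut] at hbound
  omega

end CutEdges

section Averages

variable {α : Type*} {Γ : Finset (Finset (Sym2 α))} {μ : Finset (Sym2 α) → ℝ}

theorem sum_eta_eq_sum_card_inter_mul [DecidableEq α] (s : Finset (Sym2 α)) :
    ∑ e ∈ s, eta Γ μ e = ∑ γ ∈ Γ, (#(γ ∩ s) : ℝ) * μ γ := by
  simp_rw [eta, sum_filter]
  rw [sum_comm]
  refine sum_congr rfl fun γ _ => ?_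
  rw [← sum_filter, sum_const, nsmul_eq_mul, filter_mem_eq_inter, inter_comm]

theorem IsPmf.le_sum_mul (hμ : IsPmf Γ μ) {X : Finset (Sym2 α) → ℝ} {c : ℝ}
    (hX : ∀ γ ∈ Γ, c ≤ X γ) : c ≤ ∑ γ ∈ Γ, X γ * μ γ :=
  calc c = ∑ γ ∈ Γ, c * μ γ := by rw [← mul_sum, hμ.2.2, mul_one]
    _ ≤ ∑ γ ∈ Γ, X γ * μ γ := sum_le_sum fun γ hγ => mul_le_mul_of_nonneg_right (hX γ hγ) (hμ.1 γ)

theorem IsPmf.sum_mul_eq (hμ : IsPmf Γ μ) {X : Finset (Sym2 α) → ℝ} {c : ℝ}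
    (hX : ∀ γ ∈ Γ, 0 < μ γ → X γ = c) : ∑ γ ∈ Γ, X γ * μ γ = c := by
  calc ∑ γ ∈ Γ, X γ * μ γ = ∑ γ ∈ Γ, c * μ γ := sum_congr rfl fun γ hγ => by
        rcases (hμ.1 γ).eq_or_lt with h0 | hpos
        · rw [← h0, mul_zero, mul_zero]
        · rw [hX γ hγ hpos]
    _ = c := by rw [← mul_sum, hμ.2.2, mul_one]

end Averages

theorem Finset.exists_div_card_le_of_le_sum {ι : Type*} {s : Finset ι} {f : ι → ℝ} {c : ℝ}
    (hc : 0 < c) (hs : c ≤ ∑ i ∈ s, f i) : ∃ i ∈ s, c / #s ≤ f i := by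
  have hne : s.Nonempty := nonempty_of_sum_ne_zero (hc.trans_le hs).ne'
  refine exists_le_of_sum_le hne ?_
  rwa [sum_const, nsmul_eq_mul, mul_div_cancel₀ _ (by exact_mod_cast hne.card_pos.ne')]

theorem feasible_partition_usage_bound_general
    {V : Type*} [Fintype V] [DecidableEq V]
    (G : SimpleGraph V)
    (μ : Finset (Sym2 V) → ℝ) (hμ : IsPmf (spanningTrees G) μ)
    (hopt : EO (spanningTrees G) μ = MEO (spanningTrees G))
    (P : Finset (Finset V)) (hP : IsFeasiblePartition G P) :
    ((P.card : ℝ) - 1) ≤ ∑ e ∈ cutEdges G P, eta (spanningTrees G) μ e ∧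
    ((∀ γ, IsFair G γ → (γ ∩ cutEdges G P).card = P.card - 1) →
      ∑ e ∈ cutEdges G P, eta (spanningTrees G) μ e = (P.card : ℝ) - 1) ∧
    ∃ e ∈ cutEdges G P,
      ((P.card : ℝ) - 1) / ((cutEdges G P).card : ℝ) ≤ eta (spanningTrees G) μ e := by
  have hk : 1 ≤ P.card := one_le_two.trans hP.1
  have hcast : ((P.card - 1 : ℕ) : ℝ) = (P.card : ℝ) - 1 := by push_cast [hk]; ring
  have hsum := sum_eta_eq_sum_card_inter_mul (Γ := spanningTrees G) (μ := μ) (cutEdges G P)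
  have hlower : ((P.card : ℝ) - 1) ≤ ∑ e ∈ cutEdges G P, eta (spanningTrees G) μ e :=
    hsum ▸ hμ.le_sum_mul fun γ hγ =>
      hcast ▸ Nat.cast_le.2 (hP.card_sub_one_le_card_inter_cutEdges hγ)
  refine ⟨hlower, fun hfair => hsum ▸ hμ.sum_mul_eq fun γ _ hpos => ?_, ?_⟩
  · rw [hfair γ ⟨μ, hμ, hopt, hpos⟩, hcast]
  · have : (1 : ℝ) < P.card := by exact_mod_cast hP.1
    exact exists_div_card_le_of_le_sum (by linarith) hlower

/-- for an MEO-optimal pmf and a feasible partition `P`,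
`∑_{e ∈ E_P} η*(e) ≥ k_P - 1`, with equality if every fair tree uses exactly
`k_P - 1` edges of `E_P`; in particular some `e ∈ E_P` has
`η*(e) ≥ (k_P - 1)/|E_P|`. -/
theorem feasible_partition_usage_bound
    {V : Type*} [Fintype V] [DecidableEq V]
    (G : SimpleGraph V) (hG : G.Connected) (hE : G.edgeFinset.Nonempty)
    (μ : Finset (Sym2 V) → ℝ) (hμ : IsPmf (spanningTrees G) μ)
    (hopt : EO (spanningTrees G) μ = MEO (spanningTrees G))
    (P : Finset (Finset V)) (hP : IsFeasiblePartition G P) :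
    ((P.card : ℝ) - 1) ≤ ∑ e ∈ cutEdges G P, eta (spanningTrees G) μ e ∧
    ((∀ γ, IsFair G γ → (γ ∩ cutEdges G P).card = P.card - 1) →
      ∑ e ∈ cutEdges G P, eta (spanningTrees G) μ e = (P.card : ℝ) - 1) ∧
    ∃ e ∈ cutEdges G P,
      ((P.card : ℝ) - 1) / ((cutEdges G P).card : ℝ) ≤ eta (spanningTrees G) μ e :=
  feasible_partition_usage_bound_general G μ hμ hopt P hP
end
end
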